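/- arXiv:2409.20049 — 3 statements merged into one kernel-verified Lean document; each statement's English description precedes it below -/
import Mathlib

section
/- Let $\varepsilon, \gamma, C_2 > 0$, let $L$ be a positive integer, let $\alpha_1,\dots,\alpha_L \ge 0$, and for each positive integer $k$ let $X_k$ be a positive integer with $X_k \le k^{\varepsilon/2}$, let $\sigma_k \in \mathbb{R}$, set $J_k = [\sigma_k, \sigma_k + d]$ and $\tilde J_k = [\sigma_k + d/2, \sigma_k + d]$ for some fixed $d > 0$, and let $f^1_k,\dots,f^{X_k}_k : J_k \to [0,\infty)$ be continuous functions satisfying $\int_{J_k} f^i_k(s)\,ds \le C_2 k^\gamma$ for all $i$. Then there exists $k_1$ (depending only on $\varepsilon$ and $L$) such that for every $k \ge k_1$ there exists $s^* \in \tilde J_k$ with $\int_{s^* - \frac{d}{2}k^{-\alpha_\ell}}^{s^*} f^i_k(s)\,ds \le C_2 k^{\gamma - \alpha_\ell + \varepsilon}$ for all $i = 1,\dots,X_k$ and all $\ell = 1,\dots,L$. -/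
open Real Set MeasureTheory Filter Topology

/-- Time-selection lemma: from integral bounds on the families `f k i` over
`[σ k, σ k + d]`, for large `k` there is a common time `s'` in the upper half
interval at which all moving-window integrals are controlled. -/
theorem stmt0 (ε γ C2 d : ℝ) (hε : 0 < ε) (hγ : 0 < γ) (hC2 : 0 < C2) (hd : 0 < d)
    (L : ℕ) (hL : 0 < L) (α : ℕ → ℝ) (hα : ∀ ℓ, 1 ≤ ℓ → ℓ ≤ L → 0 ≤ α ℓ)
    (X : ℕ → ℕ) (σ : ℕ → ℝ) (f : ℕ → ℕ → ℝ → ℝ)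
    (hXpos : ∀ k, 1 ≤ k → 0 < X k)
    (hX : ∀ k, 1 ≤ k → (X k : ℝ) ≤ (k : ℝ) ^ (ε / 2))
    (hcont : ∀ k, 1 ≤ k → ∀ i, 1 ≤ i → i ≤ X k →
      ContinuousOn (f k i) (Icc (σ k) (σ k + d)))
    (hnonneg : ∀ k, 1 ≤ k → ∀ i, 1 ≤ i → i ≤ X k →
      ∀ s ∈ Icc (σ k) (σ k + d), 0 ≤ f k i s)
    (hint : ∀ k, 1 ≤ k → ∀ i, 1 ≤ i → i ≤ X k →
      (∫ s in (σ k)..(σ k + d), f k i s) ≤ C2 * (k : ℝ) ^ γ) :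
    ∃ k1 : ℕ, 1 ≤ k1 ∧ ∀ k, k1 ≤ k →
      ∃ s' ∈ Icc (σ k + d / 2) (σ k + d),
        ∀ i, 1 ≤ i → i ≤ X k → ∀ ℓ, 1 ≤ ℓ → ℓ ≤ L →
          (∫ s in (s' - d / 2 * (k : ℝ) ^ (-(α ℓ)))..s', f k i s)
            ≤ C2 * (k : ℝ) ^ (γ - α ℓ + ε) := by
  obtain ⟨n, hn⟩ := exists_nat_gt ((L : ℝ) ^ (2 / ε))
  refine ⟨max 1 n, le_max_left _ _, ?_⟩
  intro k hk
  have hk1 : 1 ≤ k := le_trans (le_max_left 1 n) hk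
  have hkR : (1 : ℝ) ≤ (k : ℝ) := by exact_mod_cast hk1
  have hkpos : (0:ℝ) < (k:ℝ) := by linarith
  -- L < k^(ε/2)
  have hLk : (L : ℝ) < (k : ℝ) ^ (ε / 2) := by
    have hnk : (n : ℝ) ≤ (k : ℝ) := by exact_mod_cast le_trans (le_max_right 1 n) hk
    have h1 : ((L:ℝ) ^ (2/ε)) < (k:ℝ) := lt_of_lt_of_le hn hnk
    have h2 : (((L:ℝ) ^ (2/ε)) ^ (ε/2) : ℝ) < (k:ℝ) ^ (ε/2) :=
      Real.rpow_lt_rpow (Real.rpow_nonneg (Nat.cast_nonneg L) _) h1 (by positivity)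
    rwa [← Real.rpow_mul (Nat.cast_nonneg L),
      show (2/ε) * (ε/2) = 1 by field_simp, Real.rpow_one] at h2
  set a := σ k + d / 2 with ha
  set b := σ k + d with hb
  have hσb : σ k ≤ b := by simp only [hb]; linarith
  have hab : a ≤ b := by simp only [ha, hb]; linarith
  -- continuous extension
  set F : ℕ → ℝ → ℝ := fun i => IccExtend hσb ((Icc (σ k) b).restrict (f k i)) with hF
  have hFcont : ∀ i, 1 ≤ i → i ≤ X k → Continuous (F i) := fun i h1 h2 =>
    Continuous.Icc_extend' (continuousOn_iff_continuous_restrict.mp (hcont k hk1 i h1 h2))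
  have hFeq : ∀ i, ∀ x ∈ Icc (σ k) b, F i x = f k i x := by
    intro i x hx
    simp only [hF]
    rw [IccExtend_of_mem _ _ hx]
    rfl
  have hFnonneg : ∀ i, 1 ≤ i → i ≤ X k → ∀ x, 0 ≤ F i x := by
    intro i h1 h2 x
    simp only [hF, IccExtend_apply]
    exact hnonneg k hk1 i h1 h2 _ (projIcc _ _ hσb x).2
  -- primitive
  set G : ℕ → ℝ → ℝ := fun i x => ∫ t in (σ k)..x, F i t with hG
  have hGcont : ∀ i, 1 ≤ i → i ≤ X k → Continuous (G i) := fun i h1 h2 =>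
    intervalIntegral.continuous_primitive (fun _ _ => (hFcont i h1 h2).intervalIntegrable _ _) _
  have hGadd : ∀ i, 1 ≤ i → i ≤ X k → ∀ x y : ℝ,
      G i x + (∫ t in x..y, F i t) = G i y := by
    intro i h1 h2 x y
    exact intervalIntegral.integral_add_adjacent_intervals
      ((hFcont i h1 h2).intervalIntegrable _ _) ((hFcont i h1 h2).intervalIntegrable _ _)
  have hGmono : ∀ i, 1 ≤ i → i ≤ X k → ∀ x y : ℝ, x ≤ y → G i x ≤ G i y := by
    intro i h1 h2 x y hxy
    have h := hGadd i h1 h2 x y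
    have hnn : 0 ≤ ∫ t in x..y, F i t :=
      intervalIntegral.integral_nonneg hxy (fun t _ => hFnonneg i h1 h2 t)
    linarith
  -- window widths
  set w : ℕ → ℝ := fun ℓ => d / 2 * (k:ℝ) ^ (-(α ℓ)) with hw
  have hw0 : ∀ ℓ, 1 ≤ ℓ → ℓ ≤ L → 0 ≤ w ℓ := by
    intro ℓ h1 h2; simp only [hw]; positivity
  have hwle : ∀ ℓ, 1 ≤ ℓ → ℓ ≤ L → w ℓ ≤ d / 2 := by
    intro ℓ h1 h2
    simp only [hw]
    have : (k:ℝ) ^ (-(α ℓ)) ≤ 1 := by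
      apply Real.rpow_le_one_of_one_le_of_nonpos hkR
      simpa using hα ℓ h1 h2
    nlinarith
  -- bad sets
  set Bad : ℕ → ℕ → Set ℝ := fun i ℓ =>
    {s ∈ Icc a b | C2 * (k:ℝ) ^ (γ - α ℓ + ε) < ∫ t in (s - w ℓ)..s, f k i t} with hBad
  -- window integral of f equals that of F on the good region
  have hwin : ∀ i, ∀ ℓ, 1 ≤ ℓ → ℓ ≤ L → ∀ s ∈ Icc a b,
      (∫ t in (s - w ℓ)..s, f k i t) = ∫ t in (s - w ℓ)..s, F i t := by
    intro i ℓ hℓ1 hℓ2 s hs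
    apply intervalIntegral.integral_congr
    intro t ht
    rw [uIcc_of_le (by linarith [hw0 ℓ hℓ1 hℓ2])] at ht
    have h1 : σ k ≤ t := by
      have hsa : a ≤ s := hs.1
      have hws := hwle ℓ hℓ1 hℓ2
      rw [ha] at hsa
      linarith [ht.1]
    have h2 : t ≤ b := le_trans ht.2 hs.2
    exact (hFeq i t ⟨h1, h2⟩).symm
  -- measure bound on each bad set
  have hBadVol : ∀ i, 1 ≤ i → i ≤ X k → ∀ ℓ, 1 ≤ ℓ → ℓ ≤ L →
      volume (Bad i ℓ) ≤ ENNReal.ofReal (d / 2 * (k:ℝ) ^ (-ε)) := by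
    intro i hi1 hi2 ℓ hℓ1 hℓ2
    set T := C2 * (k:ℝ) ^ (γ - α ℓ + ε) with hT
    have hT0 : 0 < T := by positivity
    set g : ℝ → ℝ := fun s => ∫ t in (s - w ℓ)..s, F i t with hg
    have hGieq : ∀ s : ℝ, g s = G i s - G i (s - w ℓ) := by
      intro s; have := hGadd i hi1 hi2 (s - w ℓ) s; simp only [hg]; linarith
    have hgcont : Continuous g := by
      have hrepr : g = fun s => G i s - G i (s - w ℓ) := funext hGieq
      rw [hrepr]
      exact (hGcont i hi1 hi2).sub ((hGcont i hi1 hi2).comp (continuous_sub_right _))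
    have hgnn : ∀ s, 0 ≤ g s := fun s =>
      intervalIntegral.integral_nonneg (by linarith [hw0 ℓ hℓ1 hℓ2])
        (fun t _ => hFnonneg i hi1 hi2 t)
    -- integral of g over [a,b] is small
    have hgint : (∫ s in a..b, g s) ≤ w ℓ * (C2 * (k:ℝ) ^ γ) := by
      have hGint : ∀ u v : ℝ, IntervalIntegrable (G i) volume u v :=
        fun u v => (hGcont i hi1 hi2).intervalIntegrable u v
      have e1 : (∫ s in a..b, g s) = (∫ s in a..b, G i s) - ∫ s in a..b, G i (s - w ℓ) := by
        simp only [hGieq]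
        exact intervalIntegral.integral_sub (hGint a b)
          (((hGcont i hi1 hi2).comp (continuous_sub_right (w ℓ))).intervalIntegrable a b)
      have e2 : (∫ s in a..b, G i (s - w ℓ)) = ∫ s in (a - w ℓ)..(b - w ℓ), G i s :=
        intervalIntegral.integral_comp_sub_right (G i) (w ℓ)
      have e3 : (∫ s in (a - w ℓ)..a, G i s) + (∫ s in a..b, G i s)
          = ∫ s in (a - w ℓ)..b, G i s :=
        intervalIntegral.integral_add_adjacent_intervals (hGint _ _) (hGint _ _)
      have e4 : (∫ s in (a - w ℓ)..(b - w ℓ), G i s) + (∫ s in (b - w ℓ)..b, G i s)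
          = ∫ s in (a - w ℓ)..b, G i s :=
        intervalIntegral.integral_add_adjacent_intervals (hGint _ _) (hGint _ _)
      have hwℓ0 := hw0 ℓ hℓ1 hℓ2
      have e5 : (∫ s in (b - w ℓ)..b, G i s) ≤ w ℓ * G i b := by
        have h := intervalIntegral.integral_mono_on (f := G i) (g := fun _ => G i b)
          (by linarith : b - w ℓ ≤ b) (hGint _ _)
          (intervalIntegrable_const)
          (fun x hx => hGmono i hi1 hi2 x b hx.2)
        rw [intervalIntegral.integral_const, sub_sub_cancel, smul_eq_mul] at h
        exact h
      have e6 : w ℓ * G i (a - w ℓ) ≤ ∫ s in (a - w ℓ)..a, G i s := by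
        have h := intervalIntegral.integral_mono_on (f := fun _ => G i (a - w ℓ)) (g := G i)
          (by linarith : a - w ℓ ≤ a) intervalIntegrable_const (hGint _ _)
          (fun x hx => hGmono i hi1 hi2 (a - w ℓ) x hx.1)
        rw [intervalIntegral.integral_const, sub_sub_cancel, smul_eq_mul] at h
        exact h
      have e7 : G i (a - w ℓ) ≥ 0 := by
        have : σ k ≤ a - w ℓ := by
          have := hwle ℓ hℓ1 hℓ2; simp only [ha]; linarith
        have h0 : G i (σ k) = 0 := by simp [hG]
        linarith [hGmono i hi1 hi2 (σ k) (a - w ℓ) this]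
      have e8 : G i b ≤ C2 * (k:ℝ) ^ γ := by
        have : G i b = ∫ t in (σ k)..b, f k i t := by
          simp only [hG]
          apply intervalIntegral.integral_congr
          intro t ht
          rw [uIcc_of_le hσb] at ht
          exact hFeq i t ht
        rw [this]
        exact hint k hk1 i hi1 hi2
      have e9 : w ℓ * G i b ≤ w ℓ * (C2 * (k:ℝ) ^ γ) := mul_le_mul_of_nonneg_left e8 hwℓ0
      have e10 : 0 ≤ w ℓ * G i (a - w ℓ) := mul_nonneg hwℓ0 e7
      linarith
    -- Markov
    set S := {s : ℝ | T ≤ g s} with hS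
    have hSmeas : MeasurableSet S := measurableSet_le measurable_const hgcont.measurable
    have hmarkov : T * ((volume.restrict (Icc a b)) S).toReal
        ≤ ∫ s, g s ∂(volume.restrict (Icc a b)) := by
      exact mul_meas_ge_le_integral_of_nonneg
        (Filter.Eventually.of_forall hgnn)
        (hgcont.integrableOn_Icc) T
    have hrint : (∫ s, g s ∂(volume.restrict (Icc a b))) = ∫ s in a..b, g s := by
      rw [intervalIntegral.integral_of_le hab, ← integral_Icc_eq_integral_Ioc]
    rw [hrint] at hmarkov
    have hfin : (volume.restrict (Icc a b)) S ≠ ⊤ := by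
      rw [Measure.restrict_apply hSmeas]
      exact ((measure_mono inter_subset_right).trans_lt measure_Icc_lt_top).ne
    -- key identity
    have ekey : T * (d / 2 * (k:ℝ) ^ (-ε)) = w ℓ * (C2 * (k:ℝ) ^ γ) := by
      have e1 : (k:ℝ) ^ (γ - α ℓ + ε) * (k:ℝ) ^ (-ε) = (k:ℝ) ^ (-(α ℓ)) * (k:ℝ) ^ γ := by
        rw [← Real.rpow_add hkpos, ← Real.rpow_add hkpos]; ring_nf
      simp only [hT, hw]
      linear_combination (C2 * (d / 2)) * e1
    have hle : ((volume.restrict (Icc a b)) S).toReal ≤ d / 2 * (k:ℝ) ^ (-ε) := by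
      have h := hmarkov.trans hgint
      rw [← ekey] at h
      exact le_of_mul_le_mul_left h hT0
    have hBadsub : Bad i ℓ ⊆ S ∩ Icc a b := by
      intro s hs
      simp only [hBad, mem_setOf_eq] at hs
      refine ⟨?_, hs.1⟩
      simp only [hS, mem_setOf_eq, hg]
      rw [← hwin i ℓ hℓ1 hℓ2 s hs.1]
      exact hs.2.le
    calc volume (Bad i ℓ) ≤ volume (S ∩ Icc a b) := measure_mono hBadsub
      _ = (volume.restrict (Icc a b)) S := (Measure.restrict_apply hSmeas).symm
      _ ≤ ENNReal.ofReal (d / 2 * (k:ℝ) ^ (-ε)) := by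
          rw [← ENNReal.ofReal_toReal hfin]
          exact ENNReal.ofReal_le_ofReal hle
  -- union bound
  set BadU : Set ℝ := ⋃ i ∈ Finset.Icc 1 (X k), ⋃ ℓ ∈ Finset.Icc 1 L, Bad i ℓ with hBadU
  have hU : volume BadU < ENNReal.ofReal (d / 2) := by
    have h1 : volume BadU ≤ ∑ i ∈ Finset.Icc 1 (X k), ∑ ℓ ∈ Finset.Icc 1 L,
        volume (Bad i ℓ) := by
      refine (measure_biUnion_finset_le _ _).trans ?_
      exact Finset.sum_le_sum (fun i _ => measure_biUnion_finset_le _ _)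
    have h2 : (∑ i ∈ Finset.Icc 1 (X k), ∑ ℓ ∈ Finset.Icc 1 L, volume (Bad i ℓ))
        ≤ (X k * L : ℕ) * ENNReal.ofReal (d / 2 * (k:ℝ) ^ (-ε)) := by
      calc (∑ i ∈ Finset.Icc 1 (X k), ∑ ℓ ∈ Finset.Icc 1 L, volume (Bad i ℓ))
          ≤ ∑ i ∈ Finset.Icc 1 (X k), ∑ ℓ ∈ Finset.Icc 1 L,
            ENNReal.ofReal (d / 2 * (k:ℝ) ^ (-ε)) := by
            refine Finset.sum_le_sum (fun i hi => Finset.sum_le_sum (fun ℓ hℓ => ?_))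
            simp only [Finset.mem_Icc] at hi hℓ
            exact hBadVol i hi.1 hi.2 ℓ hℓ.1 hℓ.2
        _ = (X k * L : ℕ) * ENNReal.ofReal (d / 2 * (k:ℝ) ^ (-ε)) := by
            rw [Finset.sum_const, Finset.sum_const, Nat.card_Icc, Nat.card_Icc]
            simp only [Nat.add_sub_cancel, nsmul_eq_mul]
            push_cast
            ring
    have h3 : ((X k * L : ℕ) : ENNReal) * ENNReal.ofReal (d / 2 * (k:ℝ) ^ (-ε))
        < ENNReal.ofReal (d / 2) := by
      rw [← ENNReal.ofReal_natCast, ← ENNReal.ofReal_mul (by positivity)]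
      rw [ENNReal.ofReal_lt_ofReal_iff (by positivity)]
      push_cast
      have hXk : (X k : ℝ) ≤ (k:ℝ) ^ (ε / 2) := hX k hk1
      have hXk0 : (0:ℝ) ≤ (X k : ℝ) := Nat.cast_nonneg _
      have hL0 : (0:ℝ) < (L : ℝ) := by exact_mod_cast hL
      have hhalf : (0:ℝ) < (k:ℝ) ^ (ε / 2) := by positivity
      have hmul : (X k : ℝ) * L < (k:ℝ) ^ ε := by
        have : (k:ℝ) ^ (ε/2) * (k:ℝ) ^ (ε/2) = (k:ℝ) ^ ε := by
          rw [← Real.rpow_add hkpos]; ring_nf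
        nlinarith
      have hinv : (k:ℝ) ^ (-ε) * (k:ℝ) ^ ε = 1 := by
        rw [← Real.rpow_add hkpos]; simp
      have hneg0 : (0:ℝ) < (k:ℝ) ^ (-ε) := by positivity
      have h4 : (X k:ℝ) * (L:ℝ) * (k:ℝ) ^ (-ε) < 1 := by
        have h5 := mul_lt_mul_of_pos_right hmul hneg0
        nlinarith [hinv]
      nlinarith [h4, hd]
    calc volume BadU ≤ _ := h1
      _ ≤ _ := h2
      _ < _ := h3
  -- select the good point
  have hnotsub : ¬ (Icc a b ⊆ BadU) := by
    intro hsub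
    have h1 : volume (Icc a b) ≤ volume BadU := measure_mono hsub
    rw [Real.volume_Icc, show b - a = d / 2 by simp only [ha, hb]; ring] at h1
    exact absurd (h1.trans_lt hU) (lt_irrefl _)
  obtain ⟨s', hs'J, hs'B⟩ := not_subset.mp hnotsub
  refine ⟨s', hs'J, ?_⟩
  intro i hi1 hi2 ℓ hℓ1 hℓ2
  by_contra hcon
  push_neg at hcon
  apply hs'B
  simp only [hBadU, mem_iUnion]
  refine ⟨i, Finset.mem_Icc.mpr ⟨hi1, hi2⟩, ℓ, Finset.mem_Icc.mpr ⟨hℓ1, hℓ2⟩, ?_⟩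
  exact ⟨hs'J, hcon⟩
end

section
/- Let $w \in C^2(\mathbb{R}^n \times \mathbb{R})$ be bounded, and let $h : [0,\infty) \to [0,\infty)$ be continuous with $h(s) > 0$ for $s > 0$. Suppose $w_t - \Delta w \le -h(w)$ pointwise on the open set $W^+ := \{(x,t) : w(x,t) > 0\}$. Then $W^+ = \emptyset$, i.e., $w \le 0$ everywhere. -/
open Real Set Filter Topology

/-!
Suppose `w(x₁, t₁) > 0` and `|w| ≤ M`. For small `ε > 0` the function `w - ε P`, with
`P(x, t) = |x - x₁|² + √((t - t₁)² + 1) - 1` (so `ψ = -ε P` in the paper), is bounded above and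
tends to `-∞` at infinity, hence attains a global maximum at some `(x₀, t₀)`. Since `P ≥ 0` and
`P(x₁, t₁) = 0`, we get `w(x₀, t₀) ∈ [w(x₁, t₁), M]`, where `h ≥ H > 0`. At the maximum,
`∂ₜw ≥ -ε` because `|∂ₜP| ≤ 1`, and every `∂ᵢ²w ≤ 2ε`, so `w_t - Δw ≥ -(2n + 1)ε > -H`,
contradicting `w_t - Δw ≤ -h(w) ≤ -H`.
-/

/-- A local maximum with `f'' > 0` would also be a local minimum, making `f` locally constant. -/
theorem IsLocalMax.deriv_deriv_nonpos {f : ℝ → ℝ} {a : ℝ} (hf : IsLocalMax f a)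
    (hc : ContinuousAt f a) : deriv (deriv f) a ≤ 0 := by
  by_contra! hpos
  have hconst : f =ᶠ[𝓝 a] fun _ => f a :=
    ((isLocalMin_of_deriv_deriv_pos hpos hf.deriv_eq_zero hc).and hf).mono
      fun _ hx => le_antisymm hx.2 hx.1
  have hzero : deriv (deriv f) a = 0 := by
    rw [hconst.deriv.deriv_eq]
    simp
  exact hpos.ne' hzero

theorem fderiv_fderiv_apply_le_of_forall_le {E : Type*} [NormedAddCommGroup E]
    [NormedSpace ℝ E] {G : E → ℝ} (hG : ContDiff ℝ 2 G) {x v : E} {a b : ℝ}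
    (hle : ∀ s : ℝ, G (x + s • v) ≤ G x + b * s + a * s ^ 2) :
    fderiv ℝ (fun y => fderiv ℝ G y v) x v ≤ 2 * a := by
  set g : ℝ → ℝ := fun s => G (x + s • v) - (b * s + a * s ^ 2)
  have hline : ∀ s : ℝ, HasDerivAt (fun s : ℝ => x + s • v) v s := fun s =>
    (((hasDerivAt_id s).smul_const v).const_add x).congr_deriv (one_smul ℝ v)
  have hquad : ∀ s : ℝ, HasDerivAt (fun s : ℝ => b * s + a * s ^ 2) (b + 2 * a * s) s := by
    intro s
    exact (((hasDerivAt_id s).const_mul b).add (((hasDerivAt_id s).pow 2).const_mul a)).congr_deriv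
      (by simp only [mul_one, Nat.cast_ofNat, id_eq, Nat.add_one_sub_one, pow_one]; ring)
  have hDG : Differentiable ℝ fun y => fderiv ℝ G y v :=
    ((hG.fderiv_right (m := 1) (by norm_num)).clm_apply contDiff_const).differentiable
      (by norm_num)
  have hg' : deriv g = fun s => fderiv ℝ G (x + s • v) v - (b + 2 * a * s) := funext fun s =>
    ((((hG.differentiable (by norm_num)) _).hasFDerivAt.comp_hasDerivAt s (hline s)).sub
      (hquad s)).deriv
  have hg'' : HasDerivAt (deriv g) (fderiv ℝ (fun y => fderiv ℝ G y v) x v - 2 * a) 0 := by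
    rw [hg']
    have h1 := (hDG (x + (0:ℝ) • v)).hasFDerivAt.comp_hasDerivAt 0 (hline 0)
    rw [zero_smul, add_zero] at h1
    exact (h1.sub (((hasDerivAt_id (0:ℝ)).const_mul (2 * a)).const_add b)).congr_deriv (by simp)
  have hmax : IsLocalMax g 0 := Eventually.of_forall fun s => by
    simp only [g, zero_smul, add_zero]
    linarith [hle s]
  have hcont : ContinuousAt g 0 :=
    ((hG.continuous.comp (continuous_const.add (continuous_id.smul continuous_const))).sub
      (by fun_prop)).continuousAt
  linarith [hg''.deriv ▸ hmax.deriv_deriv_nonpos hcont]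

theorem IsCompact.exists_pos_forall_le {X : Type*} [TopologicalSpace X] {K : Set X}
    (hK : IsCompact K) {f : X → ℝ} (hf : ContinuousOn f K) (hpos : ∀ x ∈ K, 0 < f x) :
    ∃ c > 0, ∀ x ∈ K, c ≤ f x := by
  rcases K.eq_empty_or_nonempty with rfl | hne
  · exact ⟨1, one_pos, by simp⟩
  · obtain ⟨x, hx, hmin⟩ := hK.exists_isMinOn hne hf
    exact ⟨f x, hpos x hx, hmin⟩

theorem Continuous.exists_forall_sub_le {X : Type*} [TopologicalSpace X] [Nonempty X]
    {f p : X → ℝ} (hf : Continuous f) (hbdd : BddAbove (range f)) (hp : Continuous p)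
    (hp_lim : Tendsto p (cocompact X) atTop) : ∃ x₀, ∀ x, f x - p x ≤ f x₀ - p x₀ := by
  obtain ⟨C, hC⟩ := hbdd
  exact (hf.sub hp).exists_forall_ge <|
    tendsto_atBot_add_left_of_ge _ C (fun x => hC ⟨x, rfl⟩) (tendsto_neg_atTop_atBot.comp hp_lim)

section Penalty

variable {n : ℕ}

noncomputable def penalty (c q : (Fin n → ℝ) × ℝ) : ℝ :=
  ∑ j, (q.1 j - c.1 j) ^ 2 + (√((q.2 - c.2) ^ 2 + 1) - 1)

theorem one_le_sqrt_sq_add_one (u : ℝ) : 1 ≤ √(u ^ 2 + 1) :=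
  Real.one_le_sqrt.mpr (by nlinarith [sq_nonneg u])

theorem penalty_nonneg (c q : (Fin n → ℝ) × ℝ) : 0 ≤ penalty c q :=
  add_nonneg (Finset.sum_nonneg fun _ _ => sq_nonneg _)
    (sub_nonneg.mpr (one_le_sqrt_sq_add_one _))

@[simp]
theorem penalty_self (c : (Fin n → ℝ) × ℝ) : penalty c c = 0 := by
  simp [penalty]

theorem continuous_penalty (c : (Fin n → ℝ) × ℝ) : Continuous (penalty c) := by
  unfold penalty
  fun_prop

theorem dist_le_penalty_add_one (c q : (Fin n → ℝ) × ℝ) : dist q c ≤ penalty c q + 1 := by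
  have hsum : 0 ≤ ∑ j, (q.1 j - c.1 j) ^ 2 := Finset.sum_nonneg fun _ _ => sq_nonneg _
  have hsqrt := one_le_sqrt_sq_add_one (q.2 - c.2)
  rw [Prod.dist_eq, penalty]
  refine max_le ((dist_pi_le_iff (by linarith)).mpr fun j => ?_) ?_
  · have hj : (q.1 j - c.1 j) ^ 2 ≤ ∑ j, (q.1 j - c.1 j) ^ 2 :=
      Finset.single_le_sum (f := fun j => (q.1 j - c.1 j) ^ 2) (fun _ _ => sq_nonneg _)
        (Finset.mem_univ j)
    rw [Real.dist_eq]
    nlinarith [abs_nonneg (q.1 j - c.1 j), sq_abs (q.1 j - c.1 j)]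
  · rw [Real.dist_eq]
    linarith [Real.abs_le_sqrt (le_add_of_nonneg_right zero_le_one : (q.2 - c.2) ^ 2 ≤ _)]

theorem tendsto_penalty_cocompact (c : (Fin n → ℝ) × ℝ) :
    Tendsto (penalty c) (cocompact _) atTop :=
  tendsto_atTop_mono (fun q => by linarith [dist_le_penalty_add_one c q])
    (tendsto_atTop_add_const_right _ (-1) (tendsto_dist_right_cocompact_atTop c))

theorem penalty_add_smul_single (c : (Fin n → ℝ) × ℝ) (x : Fin n → ℝ) (t s : ℝ) (i : Fin n) :
    penalty c (x + s • Pi.single i 1, t) =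
      penalty c (x, t) + 2 * (x i - c.1 i) * s + s ^ 2 := by
  have hterm : ∀ j, ((x + s • Pi.single i 1 : Fin n → ℝ) j - c.1 j) ^ 2 =
      (x j - c.1 j) ^ 2 + Pi.single (M := fun _ => ℝ) i (2 * (x i - c.1 i) * s + s ^ 2) j := by
    intro j
    rcases eq_or_ne j i with rfl | hj
    · simp only [Pi.add_apply, Pi.smul_apply, Pi.single_eq_same, smul_eq_mul, mul_one]
      ring
    · simp [hj]
  simp only [penalty, hterm, Finset.sum_add_distrib, Fintype.sum_pi_single']
  ring

theorem hasDerivAt_penalty_snd (c : (Fin n → ℝ) × ℝ) (x : Fin n → ℝ) (t : ℝ) :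
    HasDerivAt (fun τ => penalty c (x, τ)) ((t - c.2) / √((t - c.2) ^ 2 + 1)) t := by
  have hinner : HasDerivAt (fun τ : ℝ => (τ - c.2) ^ 2 + 1) (2 * (t - c.2)) t :=
    ((((hasDerivAt_id t).sub_const c.2).pow 2).add_const 1).congr_deriv (by simp)
  have hsqrt := (Real.hasDerivAt_sqrt (by positivity)).comp t hinner
  refine ((hsqrt.sub_const 1).const_add (∑ j, (x j - c.1 j) ^ 2)).congr_deriv ?_
  field_simp

theorem abs_div_sqrt_sq_add_one_le_one (u : ℝ) : |u / √(u ^ 2 + 1)| ≤ 1 := by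
  have hpos : 0 < √(u ^ 2 + 1) := by positivity
  rw [abs_div, abs_of_pos hpos, div_le_one hpos]
  exact Real.abs_le_sqrt (by linarith)

end Penalty

section MaximumPoint

variable {n : ℕ} {w : (Fin n → ℝ) → ℝ → ℝ} {c : (Fin n → ℝ) × ℝ} {ε : ℝ} {x₀ : Fin n → ℝ}
  {t₀ : ℝ}

/-- `Fin n → ℝ` carries the sup norm, so Mathlib's `InnerProductSpace.laplacian` does not apply. -/
noncomputable def coordLaplacian (f : (Fin n → ℝ) → ℝ) (x : Fin n → ℝ) : ℝ :=
  ∑ i, fderiv ℝ (fun y => fderiv ℝ f y (Pi.single i 1)) x (Pi.single i 1)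

theorem neg_le_deriv_of_isMax_sub_penalty (hw : DifferentiableAt ℝ (fun τ => w x₀ τ) t₀)
    (hε : 0 ≤ ε) (hmax : ∀ x t, w x t - ε * penalty c (x, t) ≤ w x₀ t₀ - ε * penalty c (x₀, t₀)) :
    -ε ≤ deriv (fun τ => w x₀ τ) t₀ := by
  have hcrit := IsLocalMax.hasDerivAt_eq_zero (Eventually.of_forall fun τ => hmax x₀ τ)
    (hw.hasDerivAt.sub ((hasDerivAt_penalty_snd c x₀ t₀).const_mul ε))
  have hslope := abs_le.mp (abs_div_sqrt_sq_add_one_le_one (t₀ - c.2))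
  nlinarith

theorem fderiv_fderiv_single_le_of_isMax_sub_penalty (hw : ContDiff ℝ 2 fun z => w z t₀)
    (hmax : ∀ x t, w x t - ε * penalty c (x, t) ≤ w x₀ t₀ - ε * penalty c (x₀, t₀))
    (i : Fin n) :
    fderiv ℝ (fun y => fderiv ℝ (fun z => w z t₀) y (Pi.single i 1)) x₀ (Pi.single i 1) ≤
      2 * ε :=
  fderiv_fderiv_apply_le_of_forall_le hw (b := 2 * ε * (x₀ i - c.1 i)) fun s => by
    have := hmax (x₀ + s • Pi.single i 1) t₀
    rw [penalty_add_smul_single] at this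
    linarith

theorem heat_operator_ge_of_isMax_sub_penalty
    (hw : ContDiff ℝ 2 fun q : (Fin n → ℝ) × ℝ => w q.1 q.2) (hε : 0 ≤ ε)
    (hmax : ∀ x t, w x t - ε * penalty c (x, t) ≤ w x₀ t₀ - ε * penalty c (x₀, t₀)) :
    -((2 * n + 1) * ε) ≤ deriv (fun τ => w x₀ τ) t₀ - coordLaplacian (fun z => w z t₀) x₀ := by
  have htime := neg_le_deriv_of_isMax_sub_penalty
    ((hw.comp (contDiff_const.prodMk contDiff_id)).differentiable (by norm_num) t₀) hε hmax
  have hslice : ContDiff ℝ 2 fun z => w z t₀ := hw.comp (contDiff_id.prodMk contDiff_const)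
  have hspace : coordLaplacian (fun z => w z t₀) x₀ ≤ n * (2 * ε) := by
    have := Finset.sum_le_sum fun i (_ : i ∈ Finset.univ) =>
      fderiv_fderiv_single_le_of_isMax_sub_penalty hslice hmax i
    simpa [coordLaplacian] using this
  linarith

end MaximumPoint

theorem stmt12_general (n : ℕ) (w : (Fin n → ℝ) → ℝ → ℝ)
    (hw : ContDiff ℝ 2 (fun q : (Fin n → ℝ) × ℝ => w q.1 q.2))
    (hbd : ∃ M, ∀ x t, |w x t| ≤ M)
    (h : ℝ → ℝ) (hh : ContinuousOn h (Ici 0))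
    (hhpos : ∀ s > (0 : ℝ), 0 < h s)
    (hsub : ∀ x t, 0 < w x t →
      deriv (fun τ => w x τ) t -
        (∑ i : Fin n,
          fderiv ℝ (fun y => fderiv ℝ (fun z => w z t) y (Pi.single i (1 : ℝ))) x
            (Pi.single i (1 : ℝ)))
      ≤ -h (w x t)) :
    ∀ x t, w x t ≤ 0 := by
  by_contra! hpos
  obtain ⟨x₁, t₁, hw₁⟩ := hpos
  obtain ⟨M, hM⟩ := hbd
  obtain ⟨H, hH, hHle⟩ := isCompact_Icc.exists_pos_forall_le
    (hh.mono fun s hs => hw₁.le.trans hs.1) fun s hs => hhpos s (hw₁.trans_le hs.1)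
  obtain ⟨ε, hε, hε_eq⟩ : ∃ ε > 0, (2 * n + 1) * ε = H / 2 :=
    ⟨H / (2 * (2 * n + 1)), by positivity, by field_simp⟩
  obtain ⟨⟨x₀, t₀⟩, hmax⟩ := hw.continuous.exists_forall_sub_le
    (p := fun q => ε * penalty (x₁, t₁) q)
    ⟨M, by rintro _ ⟨q, rfl⟩; exact (abs_le.mp (hM q.1 q.2)).2⟩
    (continuous_const.mul (continuous_penalty (x₁, t₁)))
    ((tendsto_penalty_cocompact (x₁, t₁)).const_mul_atTop hε)
  have hw₀ : w x₁ t₁ ≤ w x₀ t₀ := by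
    have := hmax (x₁, t₁)
    rw [penalty_self, mul_zero, sub_zero] at this
    linarith [mul_nonneg hε.le (penalty_nonneg (x₁, t₁) (x₀, t₀))]
  have hlower := heat_operator_ge_of_isMax_sub_penalty hw hε.le fun x t => hmax (x, t)
  have hupper := hsub x₀ t₀ (hw₁.trans_le hw₀)
  have hHle₀ := hHle (w x₀ t₀) ⟨hw₀, (abs_le.mp (hM x₀ t₀)).2⟩
  unfold coordLaplacian at hlower
  linarith

/-- Maximum-principle-type Liouville statement: a bounded `C²` function `w`
on `ℝⁿ × ℝ` satisfying `w_t - Δw ≤ -h(w)` on `{w > 0}`, with `h` continuous,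
nonnegative, and positive on `(0,∞)`, must satisfy `w ≤ 0` everywhere. -/
theorem stmt12 (n : ℕ) (w : (Fin n → ℝ) → ℝ → ℝ)
    (hw : ContDiff ℝ 2 (fun q : (Fin n → ℝ) × ℝ => w q.1 q.2))
    (hbd : ∃ M, ∀ x t, |w x t| ≤ M)
    (h : ℝ → ℝ) (hh : ContinuousOn h (Ici 0))
    (hhnn : ∀ s ≥ (0 : ℝ), 0 ≤ h s)
    (hhpos : ∀ s > (0 : ℝ), 0 < h s)
    (hsub : ∀ x t, 0 < w x t →
      deriv (fun τ => w x τ) t -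
        (∑ i : Fin n,
          fderiv ℝ (fun y => fderiv ℝ (fun z => w z t) y (Pi.single i (1 : ℝ))) x
            (Pi.single i (1 : ℝ)))
      ≤ -h (w x t)) :
    ∀ x t, w x t ≤ 0 :=
  stmt12_general n w hw hbd h hh hhpos hsub
end

section
/- Let $\beta > 0$, $k \ge 1$, and suppose $f^+ : (0,\infty) \to (0,\infty)$ satisfies: for every $\theta > 0$ there exists $\lambda_\theta > 0$ such that $\lambda^{p+\theta} \le f^+(\lambda) \le \lambda^{p-\theta}$ for $0 < \lambda < \lambda_\theta$, where $p = 1 + 1/\beta > 1$. Fix $\xi \in (0, \beta)$ and $\alpha > 0$, and suppose sequences $\tilde W_k \ge k^{\xi}$ and $z_k := \tilde W_k \phi_k$ with $c k^{-\beta} \le \phi_k \le C k^{-\beta}$ for constants $c, C > 0$, and $z_k \to 0$. Define $\beta_k$ by $\tilde W_k^{-1/(2\beta)}\left(\frac{z_k^p}{f^+(z_k)}\right)^{1/2} = \tilde W_k^{-1/(2\beta_k)}$. Then $\beta_k \to \beta$ as $k \to \infty$. -/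
/-!
Taking logarithms in the defining equation gives
`1/β_k = 1/β - log (z_k^p / f⁺(z_k)) / log W̃_k`, so it suffices that the last quotient tends to `0`.
The bounds on `f⁺` make its numerator `o(log z_k)` as `z_k → 0⁺`; `z_k ≥ c k^{ξ-β}` and `z_k ≤ 1` give
`log z_k = O(log k)`; and `W̃_k ≥ k^ξ` gives `log k = O(log W̃_k)`.
-/

open Real Set Filter Topology Asymptotics

theorem isLittleO_log_rpow_div_of_rpow_bounds (f : ℝ → ℝ) (p : ℝ)
    (hf : ∀ θ > (0 : ℝ), ∃ lc > (0 : ℝ), ∀ x : ℝ, 0 < x → x < lc →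
      x ^ (p + θ) ≤ f x ∧ f x ≤ x ^ (p - θ)) :
    (fun x => log (x ^ p / f x)) =o[𝓝[>] 0] log := by
  refine IsLittleO.of_bound fun θ hθ => ?_
  obtain ⟨lc, hlc, hbounds⟩ := hf θ hθ
  filter_upwards [Ioo_mem_nhdsGT hlc] with x ⟨hx, hxlc⟩
  obtain ⟨hlow, hup⟩ := hbounds x hx hxlc
  have hfx : 0 < f x := (rpow_pos_of_pos hx _).trans_le hlow
  have hlog_low : (p + θ) * log x ≤ log (f x) := by
    rw [← log_rpow hx]; exact log_le_log (rpow_pos_of_pos hx _) hlow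
  have hlog_up : log (f x) ≤ (p - θ) * log x := by
    rw [← log_rpow hx]; exact log_le_log hfx hup
  rw [log_div (rpow_pos_of_pos hx _).ne' hfx.ne', log_rpow hx, norm_eq_abs, norm_eq_abs, abs_le]
  constructor <;> nlinarith [neg_abs_le (log x), le_abs_self (log x)]

theorem isBigO_log_of_mul_rpow_le_of_le_one {α : Type*} {l : Filter α} {u g : α → ℝ} {a s : ℝ}
    (ha : 0 < a) (hg : Tendsto g l atTop) (hlow : ∀ᶠ x in l, a * g x ^ s ≤ u x)
    (hup : ∀ᶠ x in l, u x ≤ 1) :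
    (fun x => log (u x)) =O[l] fun x => log (g x) := by
  have hbound : (fun x => ‖log (u x)‖) ≤ᶠ[l] fun x => -log a - s * log (g x) := by
    filter_upwards [hlow, hup, hg.eventually_gt_atTop 0] with x hlow hup hgx
    have hpos : 0 < a * g x ^ s := by positivity
    have h := log_le_log hpos hlow
    rw [log_mul ha.ne' (by positivity), log_rpow hgx] at h
    rw [norm_eq_abs, abs_of_nonpos (log_nonpos (hpos.le.trans hlow) hup)]
    linarith
  exact (IsBigO.of_norm_eventuallyLE hbound).trans
    (((isLittleO_const_log_atTop.comp_tendsto hg).isBigO).sub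
      ((isBigO_refl _ _).const_mul_left s))

theorem isBigO_log_of_one_le_of_rpow_le {α : Type*} {l : Filter α} {g W : α → ℝ} {ξ : ℝ} (hξ : 0 < ξ)
    (hg : ∀ᶠ x in l, 1 ≤ g x) (hW : ∀ᶠ x in l, g x ^ ξ ≤ W x) :
    (fun x => log (g x)) =O[l] fun x => log (W x) := by
  refine IsBigO.of_bound ξ⁻¹ ?_
  filter_upwards [hg, hW] with x hg hW
  have hg0 : 0 < g x := one_pos.trans_le hg
  have h : ξ * log (g x) ≤ log (W x) := by
    rw [← log_rpow hg0]; exact log_le_log (by positivity) hW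
  rw [norm_eq_abs, norm_eq_abs, abs_of_nonneg (log_nonneg hg), le_inv_mul_iff₀ hξ]
  exact h.trans (le_abs_self _)

theorem inv_eq_inv_sub_log_div_log_of_rpow_eq {W q β b : ℝ} (hW : 1 < W) (hq : 0 < q)
    (h : W ^ (-(1 / (2 * β))) * q ^ ((1 : ℝ) / 2) = W ^ (-(1 / (2 * b)))) :
    b⁻¹ = β⁻¹ - log q / log W := by
  have hW0 : 0 < W := one_pos.trans hW
  have hlogW : log W ≠ 0 := (log_pos hW).ne'
  have hlog := congrArg log h
  rw [log_mul (by positivity) (by positivity), log_rpow hW0, log_rpow hq, log_rpow hW0] at hlog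
  simp only [one_div, mul_inv] at hlog
  refine mul_right_cancel₀ hlogW ?_
  rw [sub_mul, div_mul_cancel₀ _ hlogW]
  linarith

theorem stmt19_general (β ξ : ℝ) (hβ : 0 < β) (hξ : 0 < ξ)
    (p : ℝ)
    (fplus : ℝ → ℝ) (hfpos : ∀ x > (0 : ℝ), 0 < fplus x)
    (hreg : ∀ θ > (0 : ℝ), ∃ lc > (0 : ℝ), ∀ lam : ℝ, 0 < lam → lam < lc →
      lam ^ (p + θ) ≤ fplus lam ∧ fplus lam ≤ lam ^ (p - θ))
    (W z φk βk : ℕ → ℝ) (c C : ℝ) (hc : 0 < c)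
    (hW : ∀ k : ℕ, 1 ≤ k → (k : ℝ) ^ ξ ≤ W k)
    (hz : ∀ k : ℕ, 1 ≤ k → z k = W k * φk k)
    (hφ : ∀ k : ℕ, 1 ≤ k → c * (k : ℝ) ^ (-β) ≤ φk k ∧ φk k ≤ C * (k : ℝ) ^ (-β))
    (hz0 : Tendsto z atTop (nhds 0))
    (hβk : ∀ k : ℕ, 1 ≤ k → (W k) ^ (-(1 / (2 * β))) * ((z k ^ p) / fplus (z k)) ^ ((1 : ℝ) / 2)
      = (W k) ^ (-(1 / (2 * βk k)))) :
    Tendsto βk atTop (nhds β) := by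
  have hz_low : ∀ᶠ k : ℕ in atTop, c * (k : ℝ) ^ (ξ - β) ≤ z k := by
    filter_upwards [eventually_ge_atTop 1] with k hk
    have hk0 : (0 : ℝ) < k := by exact_mod_cast hk
    calc c * (k : ℝ) ^ (ξ - β) = (k : ℝ) ^ ξ * (c * (k : ℝ) ^ (-β)) := by
          rw [sub_eq_add_neg, rpow_add hk0]; ring
      _ ≤ W k * φk k :=
          mul_le_mul (hW k hk) (hφ k hk).1 (by positivity) ((rpow_nonneg hk0.le ξ).trans (hW k hk))
      _ = z k := (hz k hk).symm
  have hz_pos : ∀ᶠ k : ℕ in atTop, 0 < z k := by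
    filter_upwards [hz_low, eventually_ge_atTop 1] with k hlow hk
    have hk0 : (0 : ℝ) < k := by exact_mod_cast hk
    exact lt_of_lt_of_le (by positivity) hlow
  have hW_gt_one : ∀ᶠ k : ℕ in atTop, 1 < W k := by
    filter_upwards [eventually_ge_atTop 2] with k hk
    exact (one_lt_rpow (by exact_mod_cast hk) hξ).trans_le (hW k (by omega))
  have hratio : Tendsto (fun k => log (z k ^ p / fplus (z k)) / log (W k)) atTop (𝓝 0) := by
    have hlog_z := isBigO_log_of_mul_rpow_le_of_le_one hc tendsto_natCast_atTop_atTop hz_low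
      (hz0.eventually (eventually_le_nhds one_pos))
    have hlog_k := isBigO_log_of_one_le_of_rpow_le (g := fun k : ℕ => (k : ℝ)) hξ
      (eventually_ge_atTop 1 |>.mono fun k hk => by exact_mod_cast hk)
      (eventually_ge_atTop 1 |>.mono hW)
    have hz_right : Tendsto z atTop (𝓝[>] 0) := tendsto_nhdsWithin_iff.2 ⟨hz0, hz_pos⟩
    exact (((isLittleO_log_rpow_div_of_rpow_bounds fplus p hreg).comp_tendsto hz_right).trans_isBigO
      (hlog_z.trans hlog_k)).tendsto_div_nhds_zero
  have hinv : ∀ᶠ k in atTop, (βk k)⁻¹ = β⁻¹ - log (z k ^ p / fplus (z k)) / log (W k) := by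
    filter_upwards [hW_gt_one, hz_pos, eventually_ge_atTop 1] with k hWk hzk hk
    exact inv_eq_inv_sub_log_div_log_of_rpow_eq hWk
      (div_pos (rpow_pos_of_pos hzk p) (hfpos _ hzk)) (hβk k hk)
  have hlim := ((tendsto_const_nhds (x := β⁻¹)).sub hratio).inv₀ (by simpa using hβ.ne')
  rw [sub_zero, inv_inv] at hlim
  refine hlim.congr' ?_
  filter_upwards [hinv] with k hk
  rw [← hk, inv_inv]

/-- Rescaling-exponent convergence: if `f⁺` has the regular-variation-type
bounds `λ^{p+θ} ≤ f⁺(λ) ≤ λ^{p-θ}` near `0`, `W̃_k ≥ k^ξ`, `z_k = W̃_k φ_k`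
with `c k^{-β} ≤ φ_k ≤ C k^{-β}` and `z_k → 0`, then the exponents `β_k`
defined by `W̃_k^{-1/(2β)} (z_k^p / f⁺(z_k))^{1/2} = W̃_k^{-1/(2β_k)}`
converge to `β`. -/
theorem stmt19 (β ξ α : ℝ) (hβ : 0 < β) (hξ : 0 < ξ) (hξβ : ξ < β) (hα : 0 < α)
    (p : ℝ) (hpdef : p = 1 + 1 / β)
    (fplus : ℝ → ℝ) (hfpos : ∀ x > (0 : ℝ), 0 < fplus x)
    (hreg : ∀ θ > (0 : ℝ), ∃ lc > (0 : ℝ), ∀ lam : ℝ, 0 < lam → lam < lc →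
      lam ^ (p + θ) ≤ fplus lam ∧ fplus lam ≤ lam ^ (p - θ))
    (W z φk βk : ℕ → ℝ) (c C : ℝ) (hc : 0 < c) (hC : 0 < C)
    (hW : ∀ k : ℕ, 1 ≤ k → (k : ℝ) ^ ξ ≤ W k)
    (hz : ∀ k : ℕ, 1 ≤ k → z k = W k * φk k)
    (hφ : ∀ k : ℕ, 1 ≤ k → c * (k : ℝ) ^ (-β) ≤ φk k ∧ φk k ≤ C * (k : ℝ) ^ (-β))
    (hz0 : Tendsto z atTop (nhds 0))
    (hβk : ∀ k : ℕ, 1 ≤ k → (W k) ^ (-(1 / (2 * β))) * ((z k ^ p) / fplus (z k)) ^ ((1 : ℝ) / 2)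
      = (W k) ^ (-(1 / (2 * βk k)))) :
    Tendsto βk atTop (nhds β) :=
  stmt19_general β ξ hβ hξ p fplus hfpos hreg W z φk βk c C hc hW hz hφ hz0 hβk
end
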